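/- arXiv:1709.09919 — 3 statements merged into one kernel-verified Lean document; each statement's English description precedes it below -/
import Mathlib

section
/- Let d ∈ [0,1], let g : ℕ → [0,∞), let (S_j)_{j∈ℕ} be a family of subsets of ℕ, and let (ε_j)_{j∈ℕ}, (ε_j')_{j∈ℕ} be sequences of positive reals decreasing monotonically to 0. Suppose that for every j: liminf_{n→∞} #{k ≤ n : k ∈ S_j}/n > d − ε_j, and g(k) < ε_j' for all but finitely many k ∈ S_j. Then there exists a subset S ⊆ ℕ such that liminf_{n→∞} #{k ≤ n : k ∈ S}/n ≥ d, and for every ε > 0 one has g(k) < ε for all but finitely many k ∈ S (i.e. g(k) → 0 as k → ∞ along S). -/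
/-!
For each `j` pick a threshold `a j` past which `S j` has counting density above `d - ε j` and
`g < ε' j` on `S j`, and then block boundaries `b 0 < b 1 < ⋯` with `a j ≤ ε j * b j`.
The set `T` is the union of the pieces `S j ∩ [a j, b (j + 1))`. For `n` in the block
`[b j, b (j + 1))`, the set `T ∩ [0, n]` contains all of `S j ∩ [0, n]` except possibly its
`a j ≤ ε j * n` smallest elements, so its density at `n` exceeds `d - 2 ε j`; and every element
of `T` beyond `b M` lies in some `S j` with `j ≥ M`, where `g < ε' j`.
-/

open Filter Set Topology

lemma ncard_inter_Iic_le (A : Set ℕ) (n : ℕ) : (A ∩ Iic n).ncard ≤ n + 1 :=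
  (ncard_le_ncard inter_subset_right (finite_Iic n)).trans_eq (ncard_Iic_nat n)

lemma ncard_inter_Iic_le_add {S T : Set ℕ} {a n : ℕ} (h : S ∩ Icc a n ⊆ T) :
    (S ∩ Iic n).ncard ≤ (T ∩ Iic n).ncard + a := by
  have hcover : S ∩ Iic n ⊆ (T ∩ Iic n) ∪ Iio a := by
    rintro x ⟨hxS, hxn⟩
    rcases lt_or_ge x a with hxa | hxa
    · exact Or.inr hxa
    · exact Or.inl ⟨h ⟨hxS, hxa, hxn⟩, hxn⟩
  calc (S ∩ Iic n).ncard ≤ ((T ∩ Iic n) ∪ Iio a).ncard :=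
        ncard_le_ncard hcover (((finite_Iic n).subset inter_subset_right).union (finite_Iio a))
    _ ≤ (T ∩ Iic n).ncard + (Iio a).ncard := ncard_union_le _ _
    _ = (T ∩ Iic n).ncard + a := by rw [ncard_Iio_nat]

lemma isBoundedUnder_ge_ncard_inter_Iic_div (A : Set ℕ) :
    IsBoundedUnder (· ≥ ·) atTop (fun n : ℕ => ((A ∩ Iic n).ncard : ℝ) / n) :=
  isBoundedUnder_of ⟨0, fun n => by positivity⟩

lemma isCoboundedUnder_ge_ncard_inter_Iic_div (A : Set ℕ) :
    IsCoboundedUnder (· ≥ ·) atTop (fun n : ℕ => ((A ∩ Iic n).ncard : ℝ) / n) := by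
  refine isCoboundedUnder_ge_of_eventually_le atTop (x := 2) ?_
  filter_upwards [eventually_ge_atTop 1] with n hn
  have hn' : (1 : ℝ) ≤ n := by exact_mod_cast hn
  have hcard : ((A ∩ Iic n).ncard : ℝ) ≤ n + 1 := by exact_mod_cast ncard_inter_Iic_le A n
  rw [div_le_iff₀ (by positivity)]
  linarith

lemma eventually_mul_lt_ncard_inter_Iic {A : Set ℕ} {c : ℝ}
    (h : c < liminf (fun n : ℕ => ((A ∩ Iic n).ncard : ℝ) / n) atTop) :
    ∀ᶠ n : ℕ in atTop, c * n < (A ∩ Iic n).ncard := by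
  filter_upwards [eventually_lt_of_lt_liminf h (isBoundedUnder_ge_ncard_inter_Iic_div A),
    eventually_gt_atTop 0] with n hlt hn
  rwa [lt_div_iff₀ (by exact_mod_cast hn)] at hlt

lemma le_liminf_ncard_inter_Iic_div {T : Set ℕ} {d : ℝ} {u : ℕ → ℝ}
    (hu : Tendsto u atTop (𝓝 d))
    (h : ∀ M, ∀ᶠ n : ℕ in atTop, ∃ j ≥ M, u j * n < (T ∩ Iic n).ncard) :
    d ≤ liminf (fun n : ℕ => ((T ∩ Iic n).ncard : ℝ) / n) atTop := by
  refine le_of_forall_lt_imp_le_of_dense fun c hc => ?_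
  obtain ⟨M, hM⟩ := eventually_atTop.mp (hu.eventually (lt_mem_nhds hc))
  refine le_liminf_of_le (isCoboundedUnder_ge_ncard_inter_Iic_div T) ?_
  filter_upwards [h M, eventually_gt_atTop 0] with n ⟨j, hj, hlt⟩ hn
  have hn' : (0 : ℝ) < n := by exact_mod_cast hn
  rw [le_div_iff₀ hn']
  nlinarith [hM j hj]

theorem exists_diagonal_subset (S : ℕ → Set ℕ) (P : ℕ → ℕ → Prop) (c δ : ℕ → ℝ)
    (hδ : ∀ j, 0 < δ j)
    (hdens : ∀ j, c j < liminf (fun n : ℕ => ((S j ∩ Iic n).ncard : ℝ) / n) atTop)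
    (hP : ∀ j, ∀ᶠ k in atTop, k ∈ S j → P j k) :
    ∃ T : Set ℕ,
      (∀ M, ∀ᶠ n : ℕ in atTop, ∃ j ≥ M, (c j - δ j) * n < (T ∩ Iic n).ncard) ∧
      ∀ M, ∀ᶠ k in atTop, k ∈ T → ∃ j ≥ M, P j k := by
  have hthreshold (j : ℕ) :
      ∃ a, ∀ n ≥ a, c j * n < (S j ∩ Iic n).ncard ∧ (n ∈ S j → P j n) :=
    eventually_atTop.mp ((eventually_mul_lt_ncard_inter_Iic (hdens j)).and (hP j))
  choose a ha using hthreshold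
  have hboundary (j : ℕ) : ∀ᶠ n : ℕ in atTop, a j ≤ n ∧ (a j : ℝ) ≤ δ j * n :=
    (eventually_ge_atTop (a j)).and
      ((tendsto_natCast_atTop_atTop.const_mul_atTop (hδ j)).eventually_ge_atTop (a j : ℝ))
  obtain ⟨b, hb, hab⟩ := extraction_forall_of_eventually hboundary
  set T : Set ℕ := ⋃ j, S j ∩ Ico (a j) (b (j + 1))
  refine ⟨T, fun M => ?_, fun M => ?_⟩
  · filter_upwards [eventually_ge_atTop (b M)] with n hn
    have hb0 : b 0 < n + 1 := Nat.lt_succ_of_le ((hb.monotone (Nat.zero_le M)).trans hn)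
    obtain ⟨j, hbj, hbj'⟩ := hb.exists_between_of_tendsto_atTop hb.tendsto_atTop hb0
    have hjn : b j ≤ n := Nat.lt_succ_iff.mp hbj
    have hnj : n < b (j + 1) := Nat.succ_le_iff.mp hbj'
    have hsub : S j ∩ Icc (a j) n ⊆ T :=
      fun x ⟨hxS, hax, hxn⟩ => mem_iUnion.mpr ⟨j, hxS, hax, hxn.trans_lt hnj⟩
    have hcard : ((S j ∩ Iic n).ncard : ℝ) ≤ (T ∩ Iic n).ncard + a j := by
      exact_mod_cast ncard_inter_Iic_le_add hsub
    have hdensj := (ha j n ((hab j).1.trans hjn)).1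
    have hprefix : (a j : ℝ) ≤ δ j * n :=
      (hab j).2.trans (mul_le_mul_of_nonneg_left (by exact_mod_cast hjn) (hδ j).le)
    exact ⟨j, Nat.lt_succ_iff.mp (hb.lt_iff_lt.mp (hn.trans_lt hnj)), by linarith⟩
  · filter_upwards [eventually_ge_atTop (b M)] with k hk hkT
    obtain ⟨j, hkS, hak, hkb⟩ := mem_iUnion.mp hkT
    exact ⟨j, Nat.lt_succ_iff.mp (hb.lt_iff_lt.mp (hk.trans_lt hkb)), (ha j k hak).2 hkS⟩

theorem stmt1_general (d : ℝ)
    (g : ℕ → ℝ)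
    (S : ℕ → Set ℕ) (ε ε' : ℕ → ℝ)
    (hεpos : ∀ j, 0 < ε j)
    (hε0 : Tendsto ε atTop (nhds 0)) (hε'0 : Tendsto ε' atTop (nhds 0))
    (hdens : ∀ j, d - ε j <
      liminf (fun n : ℕ => ((S j ∩ Set.Iic n).ncard : ℝ) / n) atTop)
    (hsmall : ∀ j, ∀ᶠ k in atTop, k ∈ S j → g k < ε' j) :
    ∃ T : Set ℕ,
      d ≤ liminf (fun n : ℕ => ((T ∩ Set.Iic n).ncard : ℝ) / n) atTop ∧
      ∀ e : ℝ, 0 < e → ∀ᶠ k in atTop, k ∈ T → g k < e := by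
  obtain ⟨T, hTdens, hTsmall⟩ :=
    exists_diagonal_subset S (fun j k => g k < ε' j) (fun j => d - ε j) ε hεpos hdens hsmall
  refine ⟨T, ?_, fun e he => ?_⟩
  · have hlim : Tendsto (fun j => d - ε j - ε j) atTop (𝓝 d) := by
      simpa using (tendsto_const_nhds.sub hε0).sub hε0
    exact le_liminf_ncard_inter_Iic_div hlim hTdens
  · obtain ⟨M, hM⟩ := eventually_atTop.mp (hε'0.eventually (gt_mem_nhds he))
    filter_upwards [hTsmall M] with k hk hkT
    obtain ⟨j, hj, hgk⟩ := hk hkT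
    exact hgk.trans (hM j hj)

theorem stmt1 (d : ℝ) (hd0 : 0 ≤ d) (hd1 : d ≤ 1)
    (g : ℕ → ℝ) (hg : ∀ k, 0 ≤ g k)
    (S : ℕ → Set ℕ) (ε ε' : ℕ → ℝ)
    (hεpos : ∀ j, 0 < ε j) (hε'pos : ∀ j, 0 < ε' j)
    (hεanti : Antitone ε) (hε'anti : Antitone ε')
    (hε0 : Tendsto ε atTop (nhds 0)) (hε'0 : Tendsto ε' atTop (nhds 0))
    (hdens : ∀ j, d - ε j <
      liminf (fun n : ℕ => ((S j ∩ Set.Iic n).ncard : ℝ) / n) atTop)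
    (hsmall : ∀ j, ∀ᶠ k in atTop, k ∈ S j → g k < ε' j) :
    ∃ T : Set ℕ,
      d ≤ liminf (fun n : ℕ => ((T ∩ Set.Iic n).ncard : ℝ) / n) atTop ∧
      ∀ e : ℝ, 0 < e → ∀ᶠ k in atTop, k ∈ T → g k < e :=
  stmt1_general d g S ε ε' hεpos hε0 hε'0 hdens hsmall
end

section
/- Let n ≥ 1, let τ > n − 1, let R > 0, and let Ω ⊆ ℝⁿ be a bounded measurable set. (i) There is a constant C = C(n, R) such that for every nonzero k ∈ ℤⁿ and every κ > 0, the Lebesgue measure of {ω ∈ ℝⁿ : |ω| ≤ R and |⟨ω, k⟩| < κ/|k|₁^τ} is at most C κ / |k|₁^{τ+1}, where |k|₁ = Σ_j |k_j| and ⟨·,·⟩ is the Euclidean inner product. (ii) Consequently, writing Ω*_κ = {ω ∈ Ω : |⟨ω, k⟩| ≥ κ/|k|₁^τ for all nonzero k ∈ ℤⁿ}, the set Ω ∖ ∪_{κ>0} Ω*_κ is Lebesgue-null; i.e. almost every ω ∈ Ω satisfies the Diophantine condition |⟨ω, k⟩| ≥ κ/|k|₁^τ (for all nonzero k ∈ ℤⁿ)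 for some κ > 0. -/
/-!
For fixed `k ≠ 0`, the resonant frequencies in the ball of radius `R` lie in a slab of width
`2κ / (|k|₁^τ ‖k‖₂)` around the hyperplane `k^⊥`; rotating `k` onto a coordinate axis puts the slab
inside a box, and `‖k‖₂ ≥ |k|₁ / √n` gives the bound `C κ / |k|₁^(τ+1)`. Since `τ + 1 > n`, the
lattice sum `∑ₖ |k|₁^(-(τ+1))` converges, so the frequencies in the ball that fail the condition for
every `κ` are covered, for each `κ > 0`, by a set of measure `O(κ)`, and hence form a null set.
-/

open MeasureTheory Finset Filter Topology

lemma measure_eq_zero_of_forall_pos_le_ofReal_mul {α : Type*} [MeasurableSpace α]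
    {μ : Measure α} {s : Set α} {c : ENNReal} (hc : c ≠ ⊤)
    (h : ∀ δ : ℝ, 0 < δ → μ s ≤ ENNReal.ofReal δ * c) : μ s = 0 := by
  have hlim : Tendsto (fun δ => ENNReal.ofReal δ * c) (𝓝[>] 0) (𝓝 0) := by
    simpa using ENNReal.Tendsto.mul_const (ENNReal.tendsto_ofReal
      (tendsto_nhdsWithin_of_tendsto_nhds (tendsto_id (x := 𝓝 (0 : ℝ))))) (Or.inr hc)
  exact nonpos_iff_eq_zero.1 (ge_of_tendsto hlim (eventually_nhdsWithin_of_forall h))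

section LatticeSlabs

variable {ι : Type*} [Fintype ι]

lemma summable_norm_intCast_rpow_neg {s : ℝ} (hs : Fintype.card ι < s) :
    Summable fun k : ι → ℤ => ‖fun i => (k i : ℝ)‖ ^ (-s) := by
  have hsum : Summable fun z : Submodule.span ℤ (Set.range (Pi.basisFun ℝ ι)) => ‖z‖ ^ (-s) :=
    ZLattice.summable_norm_rpow _ (-s) (by rw [ZLattice.rank ℝ]; simpa using hs)
  have hmem (k : ι → ℤ) : (fun i => (k i : ℝ)) ∈ Submodule.span ℤ (Set.range (Pi.basisFun ℝ ι)) :=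
    ((Pi.basisFun ℝ ι).mem_span_iff_repr_mem ℤ _).2 fun i => ⟨k i, by simp⟩
  have hinj : Function.Injective fun k : ι → ℤ =>
      (⟨_, hmem k⟩ : Submodule.span ℤ (Set.range (Pi.basisFun ℝ ι))) := fun k k' h => by
    funext i
    simpa using congrFun (congrArg Subtype.val h) i
  exact (hsum.comp_injective hinj).congr fun k => rfl

lemma summable_sum_abs_intCast_rpow_neg {s : ℝ} (hs : Fintype.card ι < s) :
    Summable fun k : ι → ℤ => (∑ i, |(k i : ℝ)|) ^ (-s) := by
  refine (summable_norm_intCast_rpow_neg hs).of_nonneg_of_le (fun k => by positivity) fun k => ?_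
  rcases eq_or_ne k 0 with rfl | hk
  · simp [← Pi.zero_def]
  have hpos : 0 < ‖fun i => (k i : ℝ)‖ := by
    rw [norm_pos_iff]
    exact fun h => hk (funext fun i => by simpa using congrFun h i)
  have hs0 : (0 : ℝ) ≤ Fintype.card ι := Nat.cast_nonneg _
  refine Real.rpow_le_rpow_of_nonpos hpos ?_ (by linarith)
  refine (pi_norm_le_iff_of_nonneg (by positivity)).2 fun j => ?_
  exact single_le_sum (f := fun i => |(k i : ℝ)|) (fun i _ => abs_nonneg _) (mem_univ j)

lemma one_le_sum_abs_intCast {k : ι → ℤ} (hk : k ≠ 0) : 1 ≤ ∑ i, |(k i : ℝ)| := by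
  obtain ⟨j, hj⟩ := Function.ne_iff.mp hk
  calc (1 : ℝ) ≤ |(k j : ℝ)| := by exact_mod_cast Int.one_le_abs hj
    _ ≤ ∑ i, |(k i : ℝ)| := single_le_sum (f := fun i => |(k i : ℝ)|)
        (fun i _ => abs_nonneg _) (mem_univ j)

lemma volume_norm_le_abs_apply_lt_le (i : ι) (R δ : ℝ) :
    volume {x : EuclideanSpace ℝ ι | ‖x‖ ≤ R ∧ |x i| < δ}
      ≤ ENNReal.ofReal (2 * δ) * ENNReal.ofReal (2 * R) ^ (Fintype.card ι - 1) := by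
  classical
  set B : ι → Set ℝ := Function.update (fun _ => Set.Icc (-R) R) i (Set.Ioo (-δ) δ)
  have hsub : {x : EuclideanSpace ℝ ι | ‖x‖ ≤ R ∧ |x i| < δ} ⊆
      WithLp.ofLp ⁻¹' Set.univ.pi B := by
    rintro x ⟨hxR, hxi⟩ j -
    rcases eq_or_ne j i with rfl | hj
    · simpa [B] using abs_lt.1 hxi
    · simpa [B, hj] using abs_le.1 ((PiLp.norm_apply_le x j).trans hxR)
  calc volume {x : EuclideanSpace ℝ ι | ‖x‖ ≤ R ∧ |x i| < δ}
      ≤ volume (WithLp.ofLp ⁻¹' Set.univ.pi B : Set (EuclideanSpace ℝ ι)) := measure_mono hsub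
    _ = ∏ j, volume (B j) := by
      rw [(PiLp.volume_preserving_ofLp ι).measure_preimage
        (MeasurableSet.univ_pi fun j => ?_).nullMeasurableSet, volume_pi_pi]
      rcases eq_or_ne j i with rfl | hj
      · simp [B]
      · simp [B, hj]
    _ = ENNReal.ofReal (2 * δ) * ENNReal.ofReal (2 * R) ^ (Fintype.card ι - 1) := by
      have hB (j : ι) : volume (B j) =
          Function.update (fun _ => ENNReal.ofReal (2 * R)) i (ENNReal.ofReal (2 * δ)) j := by
        rcases eq_or_ne j i with rfl | hj
        · simp [B, Real.volume_Ioo, two_mul]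
        · simp [B, hj, Real.volume_Icc, two_mul]
      simp_rw [hB]
      rw [prod_update_of_mem (mem_univ i)]
      simp [card_sdiff]

open InnerProductSpace in
lemma exists_linearIsometryEquiv_apply_eq_inner {u : EuclideanSpace ℝ ι} (hu : ‖u‖ = 1) (i : ι) :
    ∃ Φ : EuclideanSpace ℝ ι ≃ₗᵢ[ℝ] EuclideanSpace ℝ ι, ∀ x, Φ x i = ⟪x, u⟫_ℝ := by
  classical
  let Φ := (ℝ ∙ (u - EuclideanSpace.single i 1))ᗮ.reflection
  have hΦu : Φ u = EuclideanSpace.single i 1 := Submodule.reflection_sub (by simp [hu])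
  refine ⟨Φ, fun x => ?_⟩
  rw [← Φ.inner_map_map, hΦu, EuclideanSpace.inner_single_right]
  simp

lemma volume_norm_le_abs_inner_lt_le {v : EuclideanSpace ℝ ι} (hv : v ≠ 0) (R ε : ℝ) :
    volume {x : EuclideanSpace ℝ ι | ‖x‖ ≤ R ∧ |inner ℝ x v| < ε}
      ≤ ENNReal.ofReal (2 * (ε / ‖v‖)) * ENNReal.ofReal (2 * R) ^ (Fintype.card ι - 1) := by
  obtain ⟨i⟩ : Nonempty ι := by
    by_contra h
    have := not_nonempty_iff.1 h
    exact hv (Subsingleton.elim _ _)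
  have hv0 : 0 < ‖v‖ := norm_pos_iff.2 hv
  obtain ⟨Φ, hΦ⟩ := exists_linearIsometryEquiv_apply_eq_inner (u := ‖v‖⁻¹ • v)
    (by rw [norm_smul, norm_inv, norm_norm, inv_mul_cancel₀ hv0.ne']) i
  have hpre : {x : EuclideanSpace ℝ ι | ‖x‖ ≤ R ∧ |inner ℝ x v| < ε} =
      Φ.toMeasurableEquiv ⁻¹' {y | ‖y‖ ≤ R ∧ |y i| < ε / ‖v‖} := by
    ext x
    simp only [Set.mem_ofPred_eq, Set.mem_preimage, LinearIsometryEquiv.coe_toMeasurableEquiv,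
      hΦ, Φ.norm_map, real_inner_smul_right, abs_mul, abs_inv, abs_norm, lt_div_iff₀ hv0]
    rw [inv_mul_eq_div, div_mul_cancel₀ _ hv0.ne']
  rw [hpre, Φ.measurePreserving.measure_preimage_equiv]
  exact volume_norm_le_abs_apply_lt_le i R (ε / ‖v‖)

lemma sum_abs_le_sqrt_card_mul_norm (x : EuclideanSpace ℝ ι) :
    ∑ i, |x i| ≤ √(Fintype.card ι) * ‖x‖ := by
  rw [EuclideanSpace.norm_eq, ← Real.sqrt_mul (Nat.cast_nonneg _)]
  apply Real.le_sqrt_of_sq_le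
  simpa [sq_abs] using sq_sum_le_card_mul_sum_sq (s := univ) (f := fun i => |x i|)

lemma volume_norm_le_abs_sum_mul_intCast_lt_le {k : ι → ℤ} (hk : k ≠ 0) {R ε : ℝ}
    (hR : 0 ≤ R) (hε : 0 ≤ ε) :
    volume {ω : EuclideanSpace ℝ ι | ‖ω‖ ≤ R ∧ |∑ i, ω i * (k i : ℝ)| < ε}
      ≤ ENNReal.ofReal (2 * √(Fintype.card ι) * (2 * R) ^ (Fintype.card ι - 1) * ε /
          ∑ i, |(k i : ℝ)|) := by
  set v : EuclideanSpace ℝ ι := WithLp.toLp 2 fun i => (k i : ℝ)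
  have hv : v ≠ 0 := fun h => hk (funext fun i => by simpa [v] using congrArg (· i) h)
  have hv0 : 0 < ‖v‖ := norm_pos_iff.2 hv
  have hL : 0 < ∑ i, |(k i : ℝ)| := one_pos.trans_le (one_le_sum_abs_intCast hk)
  have hLv : ∑ i, |(k i : ℝ)| ≤ √(Fintype.card ι) * ‖v‖ := sum_abs_le_sqrt_card_mul_norm v
  have hinner (ω : EuclideanSpace ℝ ι) : inner ℝ ω v = ∑ i, ω i * (k i : ℝ) := by
    simp [v, PiLp.inner_apply, mul_comm]
  calc volume {ω : EuclideanSpace ℝ ι | ‖ω‖ ≤ R ∧ |∑ i, ω i * (k i : ℝ)| < ε}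
      ≤ ENNReal.ofReal (2 * (ε / ‖v‖)) * ENNReal.ofReal (2 * R) ^ (Fintype.card ι - 1) := by
        simpa only [hinner] using volume_norm_le_abs_inner_lt_le hv R ε
    _ = ENNReal.ofReal (2 * (ε / ‖v‖) * (2 * R) ^ (Fintype.card ι - 1)) := by
        rw [← ENNReal.ofReal_pow (by positivity), ← ENNReal.ofReal_mul (by positivity)]
    _ ≤ _ := by
        refine ENNReal.ofReal_le_ofReal ?_
        have hεv : ε / ‖v‖ ≤ √(Fintype.card ι) * ε / ∑ i, |(k i : ℝ)| := by
          rw [div_le_div_iff₀ hv0 hL]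
          nlinarith [mul_le_mul_of_nonneg_left hLv hε]
        calc 2 * (ε / ‖v‖) * (2 * R) ^ (Fintype.card ι - 1)
            ≤ 2 * (√(Fintype.card ι) * ε / ∑ i, |(k i : ℝ)|) * (2 * R) ^ (Fintype.card ι - 1) := by
              gcongr
          _ = _ := by ring

lemma volume_norm_le_abs_sum_mul_intCast_lt_div_rpow_le {k : ι → ℤ} (hk : k ≠ 0) {R κ : ℝ}
    (hR : 0 ≤ R) (hκ : 0 ≤ κ) (τ : ℝ) :
    volume {ω : EuclideanSpace ℝ ι | ‖ω‖ ≤ R ∧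
        |∑ i, ω i * (k i : ℝ)| < κ / (∑ i, |(k i : ℝ)|) ^ τ}
      ≤ ENNReal.ofReal (2 * √(Fintype.card ι) * (2 * R) ^ (Fintype.card ι - 1) * κ /
          (∑ i, |(k i : ℝ)|) ^ (τ + 1)) := by
  have hL : 0 < ∑ i, |(k i : ℝ)| := one_pos.trans_le (one_le_sum_abs_intCast hk)
  convert volume_norm_le_abs_sum_mul_intCast_lt_le hk hR
    (ε := κ / (∑ i, |(k i : ℝ)|) ^ τ) (by positivity) using 2
  rw [Real.rpow_add_one hL.ne']
  ring

lemma volume_norm_le_forall_exists_abs_sum_mul_intCast_lt_eq_zero {τ : ℝ}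
    (hτ : (Fintype.card ι : ℝ) - 1 < τ) {R : ℝ} (hR : 0 ≤ R) :
    volume {ω : EuclideanSpace ℝ ι | ‖ω‖ ≤ R ∧ ∀ κ : ℝ, 0 < κ →
        ∃ k : ι → ℤ, k ≠ 0 ∧ |∑ i, ω i * (k i : ℝ)| < κ / (∑ i, |(k i : ℝ)|) ^ τ} = 0 := by
  set C := 2 * √(Fintype.card ι) * (2 * R) ^ (Fintype.card ι - 1)
  set f : (ι → ℤ) → ℝ := fun k => C * (∑ i, |(k i : ℝ)|) ^ (-(τ + 1))
  have hf0 (k : ι → ℤ) : 0 ≤ f k := mul_nonneg (by positivity) (by positivity)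
  have hf : Summable f := (summable_sum_abs_intCast_rpow_neg (by linarith)).mul_left C
  have hc : ∑' k, ENNReal.ofReal (f k) ≠ ⊤ := by
    rw [← ENNReal.ofReal_tsum_of_nonneg hf0 hf]
    exact ENNReal.ofReal_ne_top
  refine measure_eq_zero_of_forall_pos_le_ofReal_mul hc fun κ hκ => ?_
  calc _ ≤ volume (⋃ k : {k : ι → ℤ // k ≠ 0}, {ω : EuclideanSpace ℝ ι | ‖ω‖ ≤ R ∧
          |∑ i, ω i * (k.1 i : ℝ)| < κ / (∑ i, |(k.1 i : ℝ)|) ^ τ}) := by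
        refine measure_mono fun ω ⟨hωR, hω⟩ => ?_
        obtain ⟨k, hk, hlt⟩ := hω κ hκ
        exact Set.mem_iUnion.2 ⟨⟨k, hk⟩, hωR, hlt⟩
    _ ≤ ∑' k : {k : ι → ℤ // k ≠ 0}, volume {ω : EuclideanSpace ℝ ι | ‖ω‖ ≤ R ∧
          |∑ i, ω i * (k.1 i : ℝ)| < κ / (∑ i, |(k.1 i : ℝ)|) ^ τ} := measure_iUnion_le _
    _ ≤ ∑' k : {k : ι → ℤ // k ≠ 0}, ENNReal.ofReal κ * ENNReal.ofReal (f k) := by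
        refine ENNReal.tsum_le_tsum fun k => ?_
        refine (volume_norm_le_abs_sum_mul_intCast_lt_div_rpow_le k.2 hR hκ.le τ).trans_eq ?_
        rw [← ENNReal.ofReal_mul hκ.le]
        simp only [f, C]
        rw [Real.rpow_neg (by positivity)]
        ring_nf
    _ ≤ ENNReal.ofReal κ * ∑' k, ENNReal.ofReal (f k) := by
        rw [ENNReal.tsum_mul_left]
        gcongr
        exact ENNReal.tsum_comp_le_tsum_of_injective Subtype.val_injective _

end LatticeSlabs

theorem stmt7_general (n : ℕ) (hn : 1 ≤ n) (τ : ℝ) (hτ : (n : ℝ) - 1 < τ) (R : ℝ) (hR : 0 < R)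
    (Ω : Set (EuclideanSpace ℝ (Fin n)))
    (hΩb : Bornology.IsBounded Ω) :
    (∃ C > 0, ∀ k : Fin n → ℤ, k ≠ 0 → ∀ κ : ℝ, 0 < κ →
      volume {ω : EuclideanSpace ℝ (Fin n) | ‖ω‖ ≤ R ∧
          |∑ i, ω i * (k i : ℝ)| < κ / (∑ i, |(k i : ℝ)|) ^ τ}
        ≤ ENNReal.ofReal (C * κ / (∑ i, |(k i : ℝ)|) ^ (τ + 1))) ∧
    volume {ω : EuclideanSpace ℝ (Fin n) | ω ∈ Ω ∧ ∀ κ : ℝ, 0 < κ →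
        ∃ k : Fin n → ℤ, k ≠ 0 ∧
          |∑ i, ω i * (k i : ℝ)| < κ / (∑ i, |(k i : ℝ)|) ^ τ} = 0 := by
  have hC : 0 < 2 * √n * (2 * R) ^ (n - 1) := by
    have : (0 : ℝ) < √n := Real.sqrt_pos.2 (by exact_mod_cast hn)
    positivity
  refine ⟨⟨_, hC, fun k hk κ hκ => ?_⟩, ?_⟩
  · simpa using volume_norm_le_abs_sum_mul_intCast_lt_div_rpow_le hk hR.le hκ.le τ
  · obtain ⟨r, hr, hΩr⟩ := hΩb.subset_closedBall_lt 0 0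
    refine measure_mono_null ?_
      (volume_norm_le_forall_exists_abs_sum_mul_intCast_lt_eq_zero (by simpa using hτ) hr.le)
    rintro ω ⟨hω, hωκ⟩
    exact ⟨by simpa using hΩr hω, hωκ⟩

theorem stmt7 (n : ℕ) (hn : 1 ≤ n) (τ : ℝ) (hτ : (n : ℝ) - 1 < τ) (R : ℝ) (hR : 0 < R)
    (Ω : Set (EuclideanSpace ℝ (Fin n))) (hΩm : MeasurableSet Ω)
    (hΩb : Bornology.IsBounded Ω) :
    (∃ C > 0, ∀ k : Fin n → ℤ, k ≠ 0 → ∀ κ : ℝ, 0 < κ →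
      volume {ω : EuclideanSpace ℝ (Fin n) | ‖ω‖ ≤ R ∧
          |∑ i, ω i * (k i : ℝ)| < κ / (∑ i, |(k i : ℝ)|) ^ τ}
        ≤ ENNReal.ofReal (C * κ / (∑ i, |(k i : ℝ)|) ^ (τ + 1))) ∧
    volume {ω : EuclideanSpace ℝ (Fin n) | ω ∈ Ω ∧ ∀ κ : ℝ, 0 < κ →
        ∃ k : Fin n → ℤ, k ≠ 0 ∧
          |∑ i, ω i * (k i : ℝ)| < κ / (∑ i, |(k i : ℝ)|) ^ τ} = 0 :=
  stmt7_general n hn τ hτ R hR Ω hΩb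
end

section
/- Let ρ > 1, 0 < κ ≤ 1, σ > 0, θ ∈ Ω_{κ,ρ}, and η ∈ H_σ with ‖η‖_σ < ∞. Let μ ∈ H_{σ−δ} satisfy μ̂(0) = 0, μ(z+θ) − μ(z) = η(z) − η̂(0) on S_{σ−δ}, and ‖μ‖_{σ−δ} ≤ Γ(ρ)/(κ(2πδ)^ρ)·‖η‖_σ, and set χ(z) = z + μ(z). Then there exists c = c(ρ,κ) > 0 such that if 0 < 3δ < σ and max(δ, ‖η‖_σ/δ^{ρ+1}) < c, then χ is injective on S_{σ−2δ} with holomorphic inverse on the interior of χ(S_{σ−2δ}), and χ(S_{σ−2δ}) ⊇ S_{σ−3δ}. -/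
/-!
For the constant `c = κ (2π)^ρ / (4 Γ(ρ))`, the smallness of `‖η‖_σ / δ^{ρ+1}` makes the bound
`M` on `μ` over `S_{σ-δ}` at most `δ/4`. Cauchy's estimate then gives `‖μ'‖ ≤ 1/2` on the strip
`|Im z| < σ - 3δ/2`, so `χ = id + μ` approximates the identity there with constant `1/2`, and the
quantitative inverse function theorem makes `χ` injective with a holomorphic inverse. Moreover
the image of the `δ`-ball about a point `w` of `S_{σ-3δ}` contains the `δ/2`-ball about `χ w`,
hence `w` itself, as `‖χ w - w‖ = ‖μ w‖ ≤ δ/4`.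
-/

/-- Membership in the class `H_σ`: continuous on the closed strip `|Im z| ≤ σ`,
holomorphic on its interior, 1-periodic on the strip, and real-valued on `ℝ`. -/
def HstripMem (σ : ℝ) (F : ℂ → ℂ) : Prop :=
  ContinuousOn F {z : ℂ | |z.im| ≤ σ} ∧
  DifferentiableOn ℂ F {z : ℂ | |z.im| < σ} ∧
  (∀ z : ℂ, |z.im| ≤ σ → F (z + 1) = F z) ∧
  (∀ x : ℝ, (F (x : ℂ)).im = 0)

/-- The sup norm `‖F‖_σ` over the closed strip `|Im z| ≤ σ`. -/
noncomputable def stripNorm (σ : ℝ) (F : ℂ → ℂ) : ℝ :=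
  sSup ((fun z => ‖F z‖) '' {z : ℂ | |z.im| ≤ σ})

open Set Metric

lemma abs_im_le_abs_im_add_dist (z w : ℂ) : |z.im| ≤ |w.im| + dist z w := by
  have := Complex.abs_im_le_norm (z - w)
  rw [Complex.sub_im, ← Complex.dist_eq] at this
  linarith [abs_sub_abs_le_abs_sub z.im w.im]

lemma closedBall_subset_setOf_abs_im_le {w : ℂ} {r t : ℝ} (h : |w.im| + r ≤ t) :
    closedBall w r ⊆ {z : ℂ | |z.im| ≤ t} := fun z hz ↦
  (abs_im_le_abs_im_add_dist z w).trans (by linarith [mem_closedBall.mp hz])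

lemma closedBall_subset_setOf_abs_im_lt {w : ℂ} {r t : ℝ} (h : |w.im| + r < t) :
    closedBall w r ⊆ {z : ℂ | |z.im| < t} := fun z hz ↦
  (abs_im_le_abs_im_add_dist z w).trans_lt (by linarith [mem_closedBall.mp hz])

lemma setOf_abs_im_le_subset_lt {s δ : ℝ} (hδ : 0 < δ) :
    {z : ℂ | |z.im| ≤ s - δ} ⊆ {z : ℂ | |z.im| < s - δ / 2} :=
  fun z (hz : |z.im| ≤ s - δ) ↦ show |z.im| < s - δ / 2 by linarith

lemma isOpen_setOf_abs_im_lt (t : ℝ) : IsOpen {z : ℂ | |z.im| < t} :=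
  isOpen_lt (by fun_prop) continuous_const

lemma convex_setOf_abs_im_lt (t : ℝ) : Convex ℝ {z : ℂ | |z.im| < t} := by
  have : {z : ℂ | |z.im| < t} = Complex.imLm ⁻¹' ball 0 t := by ext; simp
  exact this ▸ (convex_ball 0 t).linear_preimage Complex.imLm

lemma norm_deriv_le_of_abs_im_lt {f : ℂ → ℂ} {t M r : ℝ}
    (hf : DifferentiableOn ℂ f {z : ℂ | |z.im| < t}) (hM : ∀ z : ℂ, |z.im| < t → ‖f z‖ ≤ M)
    (hr : 0 < r) {z : ℂ} (hz : |z.im| + r < t) : ‖deriv f z‖ ≤ M / r := by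
  have hball := closedBall_subset_setOf_abs_im_lt hz
  refine Complex.norm_deriv_le_of_forall_mem_sphere_norm_le hr ?_
    fun w hw ↦ hM w (hball (sphere_subset_closedBall hw))
  exact (hf.mono (closure_ball z hr.ne' ▸ hball)).diffContOnCl

lemma approximatesLinearOn_add_self {𝕜 E : Type*} [NontriviallyNormedField 𝕜]
    [NormedAddCommGroup E] [NormedSpace 𝕜 E] {g : E → E} {s : Set E} {c : NNReal}
    (hg : LipschitzOnWith c g s) :
    ApproximatesLinearOn (fun z ↦ z + g z) (ContinuousLinearEquiv.refl 𝕜 E : E →L[𝕜] E) s c := by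
  refine LipschitzOnWith.approximatesLinearOn ?_
  convert hg using 1
  ext z
  simp

section HolomorphicPerturbationOnStrip

variable {μ : ℂ → ℂ} {s δ M : ℝ}
  (hμ : DifferentiableOn ℂ μ {z : ℂ | |z.im| < s}) (hM : ∀ z : ℂ, |z.im| < s → ‖μ z‖ ≤ M)
  (hδ : 0 < δ) (hMδ : 4 * M ≤ δ)
include hμ hM hδ hMδ

lemma norm_deriv_le_half {z : ℂ} (hz : |z.im| < s - δ / 2) : ‖deriv μ z‖ ≤ 1 / 2 := by
  calc ‖deriv μ z‖ ≤ M / (δ / 2) := norm_deriv_le_of_abs_im_lt hμ hM (by positivity) (by linarith)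
    _ ≤ 1 / 2 := by rw [div_le_iff₀ (by positivity)]; linarith

lemma approximatesLinearOn_add_self_strip :
    ApproximatesLinearOn (fun z ↦ z + μ z) (ContinuousLinearEquiv.refl ℂ ℂ : ℂ →L[ℂ] ℂ)
      {z : ℂ | |z.im| < s - δ / 2} (1 / 2) := by
  refine approximatesLinearOn_add_self <|
    (convex_setOf_abs_im_lt _).lipschitzOnWith_of_nnnorm_deriv_le (fun z hz ↦ ?_) fun z hz ↦ ?_
  · exact hμ.differentiableAt ((isOpen_setOf_abs_im_lt s).mem_nhds (by simp at hz ⊢; linarith))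
  · rw [← NNReal.coe_le_coe, coe_nnnorm]
    simpa using norm_deriv_le_half hμ hM hδ hMδ hz

lemma injOn_add_self : InjOn (fun z ↦ z + μ z) {z : ℂ | |z.im| ≤ s - δ} :=
  ((approximatesLinearOn_add_self_strip hμ hM hδ hMδ).mono_set (setOf_abs_im_le_subset_lt hδ)).injOn
    (.inr (by norm_num))

lemma setOf_abs_im_le_subset_image_add_self :
    {z : ℂ | |z.im| ≤ s - 2 * δ} ⊆ (fun z ↦ z + μ z) '' {z : ℂ | |z.im| ≤ s - δ} := by
  intro w (hw : |w.im| ≤ s - 2 * δ)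
  have hball : closedBall w δ ⊆ {z : ℂ | |z.im| ≤ s - δ} :=
    closedBall_subset_setOf_abs_im_le (by linarith)
  have hsurj := ((approximatesLinearOn_add_self_strip hμ hM hδ hMδ).mono_set
    (setOf_abs_im_le_subset_lt hδ)).surjOn_closedBall_of_nonlinearRightInverse
    (ContinuousLinearEquiv.refl ℂ ℂ).toNonlinearRightInverse hδ.le hball
  refine image_mono hball (hsurj ?_)
  have : ‖μ w‖ ≤ M := hM w (by linarith)
  norm_num [ContinuousLinearEquiv.toNonlinearRightInverse, dist_eq_norm]
  linarith

lemma exists_differentiableOn_leftInverse_add_self : ∃ ψ : ℂ → ℂ,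
    DifferentiableOn ℂ ψ ((fun z ↦ z + μ z) '' {z : ℂ | |z.im| < s - δ / 2}) ∧
      ∀ z : ℂ, |z.im| < s - δ / 2 → ψ (z + μ z) = z := by
  let e := (approximatesLinearOn_add_self_strip hμ hM hδ hMδ).toOpenPartialHomeomorph _ _
    (.inr (by norm_num)) (isOpen_setOf_abs_im_lt _)
  refine ⟨e.symm, fun w hw ↦ ?_, fun z hz ↦ e.left_inv hz⟩
  have hz : |(e.symm w).im| < s - δ / 2 := e.map_target hw
  have hd : HasDerivAt e (1 + deriv μ (e.symm w)) (e.symm w) :=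
    (hasDerivAt_id _).add (hμ.differentiableAt
      ((isOpen_setOf_abs_im_lt s).mem_nhds (show |(e.symm w).im| < s by linarith))).hasDerivAt
  have hne : 1 + deriv μ (e.symm w) ≠ 0 := by
    intro h
    have := norm_deriv_le_half hμ hM hδ hMδ hz
    rw [show deriv μ (e.symm w) = -1 by linear_combination h] at this
    norm_num at this
  exact (e.hasDerivAt_symm hw hne hd).differentiableAt.differentiableWithinAt

end HolomorphicPerturbationOnStrip

open Real in
lemma four_mul_gamma_div_mul_le {ρ κ δ N : ℝ} (hρ : 0 < ρ) (hκ : 0 < κ) (hδ : 0 < δ)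
    (h : N / δ ^ (ρ + 1) < κ * (2 * π) ^ ρ / (4 * Gamma ρ)) :
    4 * (Gamma ρ / (κ * (2 * π * δ) ^ ρ) * N) ≤ δ := by
  have hΓ := Gamma_pos_of_pos hρ
  have hP : 0 < κ * (2 * π) ^ ρ := by positivity
  rw [rpow_add hδ, rpow_one, div_lt_div_iff₀ (by positivity) (by positivity)] at h
  rw [mul_rpow (by positivity) hδ.le, div_mul_eq_mul_div, mul_div_assoc',
    div_le_iff₀ (by positivity)]
  linarith

theorem stmt11_general (ρ κ : ℝ) (hρ : 1 < ρ) (hκ0 : 0 < κ) :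
    ∃ c > 0,
      ∀ σ θ δ : ℝ, ∀ η μ : ℂ → ℂ,
        0 < σ →
        (∀ m n : ℤ, n ≠ 0 → κ / |(n : ℝ)| ^ ρ < |θ - (m : ℝ) / (n : ℝ)|) →
        HstripMem σ η →
        BddAbove ((fun z => ‖η z‖) '' {z : ℂ | |z.im| ≤ σ}) →
        HstripMem (σ - δ) μ →
        (∫ x in (0 : ℝ)..1, μ (x : ℂ)) = 0 →
        (∀ z : ℂ, |z.im| ≤ σ - δ →
          μ (z + (θ : ℂ)) - μ z = η z - ∫ x in (0 : ℝ)..1, η (x : ℂ)) →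
        (∀ z : ℂ, |z.im| ≤ σ - δ →
          ‖μ z‖ ≤
            Real.Gamma ρ / (κ * (2 * Real.pi * δ) ^ ρ) * stripNorm σ η) →
        0 < δ → 3 * δ < σ →
        max δ (stripNorm σ η / δ ^ (ρ + 1)) < c →
        Set.InjOn (fun z : ℂ => z + μ z) {z : ℂ | |z.im| ≤ σ - 2 * δ} ∧
        {z : ℂ | |z.im| ≤ σ - 3 * δ} ⊆
          (fun z : ℂ => z + μ z) '' {z : ℂ | |z.im| ≤ σ - 2 * δ} ∧
        ∃ ψ : ℂ → ℂ,
          DifferentiableOn ℂ ψ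
            (interior ((fun z : ℂ => z + μ z) '' {z : ℂ | |z.im| ≤ σ - 2 * δ})) ∧
          ∀ w ∈ interior ((fun z : ℂ => z + μ z) '' {z : ℂ | |z.im| ≤ σ - 2 * δ}),
            ψ w + μ (ψ w) = w ∧ |(ψ w).im| ≤ σ - 2 * δ := by
  have hρ0 : 0 < ρ := by linarith
  have hΓ := Real.Gamma_pos_of_pos hρ0
  refine ⟨κ * (2 * Real.pi) ^ ρ / (4 * Real.Gamma ρ), by positivity, ?_⟩
  intro σ θ δ η μ _ _ _ _ hμ _ _ hμ_le hδ _ hc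
  have hMδ := four_mul_gamma_div_mul_le hρ0 hκ0 hδ (max_lt_iff.mp hc).2
  have hμ_lt := fun z (hz : |z.im| < σ - δ) ↦ hμ_le z hz.le
  obtain ⟨ψ, hψ_diff, hψ⟩ := exists_differentiableOn_leftInverse_add_self hμ.2.1 hμ_lt hδ hMδ
  have hS := setOf_abs_im_le_subset_lt (s := σ - δ) hδ
  rw [show σ - 2 * δ = σ - δ - δ by ring, show σ - 3 * δ = σ - δ - 2 * δ by ring]
  refine ⟨injOn_add_self hμ.2.1 hμ_lt hδ hMδ,
    setOf_abs_im_le_subset_image_add_self hμ.2.1 hμ_lt hδ hMδ,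
    ψ, hψ_diff.mono (interior_subset.trans (image_mono hS)), ?_⟩
  rintro w hw
  obtain ⟨z, hz, rfl⟩ := interior_subset hw
  rw [hψ z (hS hz)]
  exact ⟨rfl, hz⟩

theorem stmt11 (ρ κ : ℝ) (hρ : 1 < ρ) (hκ0 : 0 < κ) (hκ1 : κ ≤ 1) :
    ∃ c > 0,
      ∀ σ θ δ : ℝ, ∀ η μ : ℂ → ℂ,
        0 < σ →
        (∀ m n : ℤ, n ≠ 0 → κ / |(n : ℝ)| ^ ρ < |θ - (m : ℝ) / (n : ℝ)|) →
        HstripMem σ η →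
        BddAbove ((fun z => ‖η z‖) '' {z : ℂ | |z.im| ≤ σ}) →
        HstripMem (σ - δ) μ →
        (∫ x in (0 : ℝ)..1, μ (x : ℂ)) = 0 →
        (∀ z : ℂ, |z.im| ≤ σ - δ →
          μ (z + (θ : ℂ)) - μ z = η z - ∫ x in (0 : ℝ)..1, η (x : ℂ)) →
        (∀ z : ℂ, |z.im| ≤ σ - δ →
          ‖μ z‖ ≤
            Real.Gamma ρ / (κ * (2 * Real.pi * δ) ^ ρ) * stripNorm σ η) →
        0 < δ → 3 * δ < σ →
        max δ (stripNorm σ η / δ ^ (ρ + 1)) < c →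
        Set.InjOn (fun z : ℂ => z + μ z) {z : ℂ | |z.im| ≤ σ - 2 * δ} ∧
        {z : ℂ | |z.im| ≤ σ - 3 * δ} ⊆
          (fun z : ℂ => z + μ z) '' {z : ℂ | |z.im| ≤ σ - 2 * δ} ∧
        ∃ ψ : ℂ → ℂ,
          DifferentiableOn ℂ ψ
            (interior ((fun z : ℂ => z + μ z) '' {z : ℂ | |z.im| ≤ σ - 2 * δ})) ∧
          ∀ w ∈ interior ((fun z : ℂ => z + μ z) '' {z : ℂ | |z.im| ≤ σ - 2 * δ}),
            ψ w + μ (ψ w) = w ∧ |(ψ w).im| ≤ σ - 2 * δ :=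
  stmt11_general ρ κ hρ hκ0
end
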